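/- arXiv:2408.09313 — 5 statements merged into one kernel-verified Lean document; each statement's English description precedes it below -/
import Mathlib

section
/- Let λ and μ be weak compositions with |λ| = |μ|. Then μ is the content of a weak composition tableau of shape λ if and only if flatt(μ) refines flatt(λ) and μ dominates λ. -/
/-!
STATEMENT 1: Let λ and μ be weak compositions with |λ| = |μ|. Then μ is the content of a
weak composition tableau of shape λ if and only if flatt(μ) refines flatt(λ) and
μ dominates λ.
-/

open scoped Classical

/-- The flattening of a weak composition: delete all zero entries. -/
def flatt (l : List ℕ) : List ℕ := l.filter (· ≠ 0)

/-- `Refines lam mu` : the composition `lam` refines the composition `mu`. -/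
def Refines (lam mu : List ℕ) : Prop :=
  ∃ L : List (List ℕ), (∀ b ∈ L, b ≠ []) ∧ L.flatten = lam ∧ L.map List.sum = mu

/-- `Dominates lam mu` : `lam` dominates `mu`, i.e. `lam_1 + ⋯ + lam_i ≥ mu_1 + ⋯ + mu_i`
for all `i`. -/
def Dominates (lam mu : List ℕ) : Prop :=
  ∀ i : ℕ, (mu.take i).sum ≤ (lam.take i).sum

/-- The boxes of the Young diagram of a (weak) composition `lam`. -/
def boxes (lam : List ℕ) : Finset (ℕ × ℕ) :=
  (Finset.range lam.length ×ˢ Finset.range (lam.foldr max 0)).filter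
    (fun p => p.2 < lam.getD p.1 0)

/-- Lexicographic order on boxes. -/
def boxLe (p q : ℕ × ℕ) : Prop := p.1 < q.1 ∨ (p.1 = q.1 ∧ p.2 ≤ q.2)

/-- `T` is a composition tableau of shape `lam`. -/
structure IsCompTableau (lam : List ℕ) (T : ℕ × ℕ → ℕ) : Prop where
  pos : ∀ p ∈ boxes lam, 1 ≤ T p
  mono : ∀ p ∈ boxes lam, ∀ q ∈ boxes lam, boxLe p q → T p ≤ T q
  rows : ∀ p ∈ boxes lam, ∀ q ∈ boxes lam, p.1 < q.1 → T p < T q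

/-- `T` is a weak composition tableau of shape `lam`: a composition tableau such that,
additionally, every entry in row `i` is at most `i` (rows here are 0-indexed, so the entries
of row `p.1` are at most `p.1 + 1`). -/
structure IsWeakCompTableau (lam : List ℕ) (T : ℕ × ℕ → ℕ) extends
    IsCompTableau lam T : Prop where
  rowBound : ∀ p ∈ boxes lam, T p ≤ p.1 + 1

/-- `mu` is the content of the tableau `T` of shape `lam`. -/
def HasContent (lam : List ℕ) (T : ℕ × ℕ → ℕ) (mu : List ℕ) : Prop :=
  ∀ i : ℕ, ((boxes lam).filter (fun p => T p = i + 1)).card = mu.getD i 0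

/-!
A tableau read row by row is a weakly increasing word whose letter `i` occurs `μ_i` times, so
the boxes with entry `≤ m` are the first `μ_1 + ⋯ + μ_m` boxes in reading order. Strictness
between rows makes each row boundary `λ_1 + ⋯ + λ_r` a boundary between letters, i.e. a partial
sum of `μ`; the row bound puts the first `λ_1 + ⋯ + λ_i` boxes among those with entry `≤ i`,
which is dominance. Conversely, writing `1^{μ_1} 2^{μ_2} ⋯` into the boxes of `λ` in reading
order gives a weak composition tableau of content `μ` whenever both conditions hold. Finally, for
compositions of the same size, refinement means inclusion of the sets of partial sums.
-/

open Finset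

def partialSums (l : List ℕ) : Set ℕ := Set.range fun m => (l.take m).sum

theorem mem_partialSums {l : List ℕ} {s : ℕ} : s ∈ partialSums l ↔ ∃ m, (l.take m).sum = s :=
  Iff.rfl

theorem sum_take_mem_partialSums (l : List ℕ) (m : ℕ) : (l.take m).sum ∈ partialSums l := ⟨m, rfl⟩

theorem sum_take_succ_eq_add_getD (l : List ℕ) (i : ℕ) :
    (l.take (i + 1)).sum = (l.take i).sum + l.getD i 0 := by
  rcases lt_or_ge i l.length with h | h
  · rw [List.sum_take_succ _ _ h, List.getD_eq_getElem _ _ h]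
  · rw [List.take_of_length_le h, List.take_of_length_le (by omega), List.getD_eq_default _ _ h,
      add_zero]

theorem sum_take_le_sum (l : List ℕ) (i : ℕ) : (l.take i).sum ≤ l.sum :=
  (List.take_sublist i l).sum_le_sum fun _ _ => Nat.zero_le _

theorem partialSums_cons (x : ℕ) (t : List ℕ) :
    partialSums (x :: t) = insert 0 ((x + ·) '' partialSums t) := by
  ext s
  simp only [partialSums, Set.mem_insert_iff, Set.mem_image, Set.mem_range]
  constructor
  · rintro ⟨_ | m, rfl⟩
    · exact Or.inl rfl
    · exact Or.inr ⟨_, ⟨m, rfl⟩, by simp⟩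
  · rintro (rfl | ⟨_, ⟨m, rfl⟩, rfl⟩)
    · exact ⟨0, rfl⟩
    · exact ⟨m + 1, by simp⟩

theorem partialSums_flatt (l : List ℕ) : partialSums (flatt l) = partialSums l := by
  induction l with
  | nil => rfl
  | cons x t ih =>
    by_cases hx : x = 0
    · rw [show flatt (x :: t) = flatt t by simp [flatt, hx], ih, partialSums_cons, hx]
      simp only [zero_add, Set.image_id']
      exact (Set.insert_eq_of_mem (sum_take_mem_partialSums t 0)).symm
    · rw [show flatt (x :: t) = x :: flatt t by simp [flatt, hx], partialSums_cons,
        partialSums_cons, ih]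

theorem sum_flatt (l : List ℕ) : (flatt l).sum = l.sum := by
  induction l with
  | nil => rfl
  | cons x t ih => by_cases hx : x = 0 <;> simp_all [flatt]

theorem zero_notMem_flatt (l : List ℕ) : 0 ∉ flatt l := by simp [flatt]

theorem Refines.partialSums_subset {a b : List ℕ} (h : Refines a b) :
    partialSums b ⊆ partialSums a := by
  obtain ⟨L, -, rfl, rfl⟩ := h
  intro s hs
  obtain ⟨r, rfl⟩ := mem_partialSums.1 hs
  refine mem_partialSums.2 ⟨(L.take r).flatten.length, ?_⟩
  have hsplit : L.flatten = (L.take r).flatten ++ (L.drop r).flatten := by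
    rw [← List.flatten_append, List.take_append_drop]
  rw [hsplit, List.take_left, List.sum_flatten, List.map_take]

theorem partialSums_subset_drop {a b : List ℕ} {t m : ℕ} (hm : (a.take m).sum = t)
    (h : partialSums (t :: b) ⊆ partialSums a) : partialSums b ⊆ partialSums (a.drop m) := by
  intro s hs
  obtain ⟨r, rfl⟩ := mem_partialSums.1 hs
  obtain ⟨m', hm'⟩ : ∃ m', (a.take m').sum = t + (b.take r).sum :=
    h (by simpa using sum_take_mem_partialSums (t :: b) (r + 1))
  have hsplit := congrArg List.sum (List.take_add (l := a) (i := m) (j := m' - m))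
  rw [List.sum_append] at hsplit
  refine mem_partialSums.2 ⟨m' - m, ?_⟩
  rcases le_or_gt m m' with hle | hlt
  · rw [Nat.add_sub_cancel' hle] at hsplit
    omega
  · have : (a.take m').sum ≤ (a.take m).sum := List.monotone_sum_take a hlt.le
    rw [Nat.sub_eq_zero_of_le hlt.le, List.take_zero, List.sum_nil]
    omega

theorem refines_of_partialSums_subset {a b : List ℕ} (ha : 0 ∉ a) (hb : 0 ∉ b)
    (hsum : a.sum = b.sum) (h : partialSums b ⊆ partialSums a) : Refines a b := by
  induction b generalizing a with
  | nil =>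
    have hnil : a = [] := List.eq_nil_iff_forall_not_mem.2 fun x hx =>
      ha (List.sum_eq_zero_iff.1 hsum x hx ▸ hx)
    exact ⟨[], by simp, by simp [hnil], rfl⟩
  | cons t b ih =>
    obtain ⟨m, hm⟩ : ∃ m, (a.take m).sum = t :=
      h (by simpa using sum_take_mem_partialSums (t :: b) 1)
    have hsum' : (a.drop m).sum = b.sum := by
      have := List.sum_take_add_sum_drop a m
      simp only [List.sum_cons] at hsum
      omega
    obtain ⟨L, hL, hflat, hsums⟩ :=
      ih (fun h0 => ha (List.mem_of_mem_drop h0)) (fun h0 => hb (List.mem_cons_of_mem t h0))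
        hsum' (partialSums_subset_drop hm h)
    refine ⟨a.take m :: L, ?_, by simp [hflat], by simp [hm, hsums]⟩
    rintro c (_ | ⟨_, hc⟩)
    · rintro hnil
      exact hb (by simp [← hm, hnil])
    · exact hL c hc

theorem refines_flatt_iff {a b : List ℕ} (hsum : a.sum = b.sum) :
    Refines (flatt a) (flatt b) ↔ partialSums b ⊆ partialSums a := by
  refine ⟨fun h => ?_, fun h => ?_⟩
  · simpa only [partialSums_flatt] using h.partialSums_subset
  · refine refines_of_partialSums_subset (zero_notMem_flatt a) (zero_notMem_flatt b)
      (by rw [sum_flatt, sum_flatt, hsum]) ?_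
    simpa only [partialSums_flatt] using h

/-- The block containing position `k` when `l` lays out consecutive blocks of `l_j` positions;
a junk `0` for `k ≥ l.sum`. -/
noncomputable def blockIndex (l : List ℕ) (k : ℕ) : ℕ := sInf {j | k < (l.take (j + 1)).sum}

section blockIndex

variable {l : List ℕ} {k : ℕ}

theorem blockIndex_lt_iff (hk : k < l.sum) (j : ℕ) :
    blockIndex l k < j ↔ k < (l.take j).sum := by
  have hmem : k < (l.take (blockIndex l k + 1)).sum :=
    Nat.sInf_mem (s := {j | k < (l.take (j + 1)).sum})
      ⟨l.length, by simpa [List.take_of_length_le] using hk⟩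
  refine ⟨fun h => hmem.trans_le (List.monotone_sum_take l h), fun h => ?_⟩
  obtain ⟨j, rfl⟩ := Nat.exists_eq_succ_of_ne_zero (by rintro rfl; simp at h : j ≠ 0)
  exact Nat.lt_succ_of_le (Nat.sInf_le h)

theorem blockIndex_eq_iff (hk : k < l.sum) (j : ℕ) :
    blockIndex l k = j ↔ (l.take j).sum ≤ k ∧ k < (l.take (j + 1)).sum := by
  rw [← not_lt, ← blockIndex_lt_iff hk, ← blockIndex_lt_iff hk]
  omega

theorem blockIndex_mono {k' : ℕ} (hk' : k' < l.sum) (h : k ≤ k') :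
    blockIndex l k ≤ blockIndex l k' :=
  Nat.lt_succ_iff.mp <| (blockIndex_lt_iff (h.trans_lt hk') _).mpr <|
    h.trans_lt <| (blockIndex_lt_iff hk' _).mp (Nat.lt_succ_self _)

theorem blockIndex_lt_blockIndex {k' s : ℕ} (hk' : k' < l.sum) (hs : s ∈ partialSums l)
    (hks : k < s) (hsk' : s ≤ k') : blockIndex l k < blockIndex l k' := by
  obtain ⟨m, rfl⟩ := hs
  calc blockIndex l k < m := (blockIndex_lt_iff ((hks.trans_le hsk').trans hk') m).mpr hks
    _ ≤ blockIndex l k' := not_lt.mp fun h => ((blockIndex_lt_iff hk' m).mp h).not_ge hsk'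

variable (l)

theorem filter_blockIndex_lt (i : ℕ) :
    {k ∈ range l.sum | blockIndex l k < i} = range (l.take i).sum := by
  ext k
  simp only [mem_filter, mem_range]
  constructor
  · rintro ⟨hk, h⟩
    exact (blockIndex_lt_iff hk i).mp h
  · intro h
    have hk := h.trans_le (sum_take_le_sum l i)
    exact ⟨hk, (blockIndex_lt_iff hk i).mpr h⟩

theorem card_filter_blockIndex_eq (i : ℕ) :
    #{k ∈ range l.sum | blockIndex l k = i} = l.getD i 0 := by
  have : {k ∈ range l.sum | blockIndex l k = i} = Ico (l.take i).sum (l.take (i + 1)).sum := by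
    ext k
    simp only [mem_filter, mem_range, mem_Ico]
    constructor
    · rintro ⟨hk, h⟩
      exact (blockIndex_eq_iff hk i).mp h
    · intro h
      have hk := h.2.trans_le (sum_take_le_sum l (i + 1))
      exact ⟨hk, (blockIndex_eq_iff hk i).mpr h⟩
  rw [this, Nat.card_Ico, sum_take_succ_eq_add_getD, Nat.add_sub_cancel_left]

end blockIndex

def boxIndex (lam : List ℕ) (p : ℕ × ℕ) : ℕ := (lam.take p.1).sum + p.2

section boxes

variable {lam : List ℕ} {p : ℕ × ℕ}

theorem mem_boxes : p ∈ boxes lam ↔ p.2 < lam.getD p.1 0 := by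
  simp only [boxes, mem_filter, mem_product, mem_range, and_iff_right_iff_imp]
  intro h
  have hlen : p.1 < lam.length := by
    by_contra hc
    rw [List.getD_eq_default _ _ (not_lt.mp hc)] at h
    omega
  exact ⟨hlen, h.trans_le
    (List.le_max_of_le' 0 (List.getElem_mem hlen) (List.getD_eq_getElem _ _ hlen).le)⟩

theorem mem_boxes_iff_boxIndex_lt :
    p ∈ boxes lam ↔ boxIndex lam p < (lam.take (p.1 + 1)).sum := by
  rw [mem_boxes, sum_take_succ_eq_add_getD, boxIndex]
  omega

theorem boxIndex_lt_sum_take (hp : p ∈ boxes lam) {i : ℕ} (hi : p.1 < i) :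
    boxIndex lam p < (lam.take i).sum :=
  (mem_boxes_iff_boxIndex_lt.mp hp).trans_le (List.monotone_sum_take lam hi)

theorem boxIndex_lt_sum (hp : p ∈ boxes lam) : boxIndex lam p < lam.sum :=
  (mem_boxes_iff_boxIndex_lt.mp hp).trans_le (sum_take_le_sum _ _)

theorem blockIndex_boxIndex (hp : p ∈ boxes lam) : blockIndex lam (boxIndex lam p) = p.1 :=
  (blockIndex_eq_iff (boxIndex_lt_sum hp) _).mpr
    ⟨Nat.le_add_right _ _, mem_boxes_iff_boxIndex_lt.mp hp⟩

theorem boxIndex_le_boxIndex {q : ℕ × ℕ} (hp : p ∈ boxes lam) (h : boxLe p q) :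
    boxIndex lam p ≤ boxIndex lam q := by
  rcases h with h | ⟨h1, h2⟩
  · exact (boxIndex_lt_sum_take hp h).le.trans (Nat.le_add_right _ _)
  · simp only [boxIndex, h1]
    omega

variable (lam)

theorem bijOn_boxIndex : Set.BijOn (boxIndex lam) (boxes lam) (range lam.sum) := by
  refine ⟨fun p hp => mem_range.2 (boxIndex_lt_sum hp), fun p hp q hq h => ?_, fun k hk => ?_⟩
  · have h1 : p.1 = q.1 := by rw [← blockIndex_boxIndex hp, h, blockIndex_boxIndex hq]
    have h2 : p.2 = q.2 := by simpa only [boxIndex, h1, Nat.add_left_cancel_iff] using h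
    exact Prod.ext h1 h2
  · have hk : k < lam.sum := mem_range.1 hk
    obtain ⟨h1, h2⟩ := (blockIndex_eq_iff hk _).mp rfl
    refine ⟨(blockIndex lam k, k - (lam.take (blockIndex lam k)).sum), ?_, ?_⟩
    · rw [Finset.mem_coe, mem_boxes_iff_boxIndex_lt]
      simp only [boxIndex]
      omega
    · simp only [boxIndex]
      omega

theorem card_filter_boxes_boxIndex (P : ℕ → Prop) [DecidablePred P] :
    #{p ∈ boxes lam | P (boxIndex lam p)} = #{k ∈ range lam.sum | P k} := by
  have h := bijOn_boxIndex lam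
  refine card_nbij (boxIndex lam) (fun p hp => ?_) (h.injOn.mono fun p hp => (mem_filter.1 hp).1)
    (fun k hk => ?_)
  · obtain ⟨hp, hP⟩ := mem_filter.1 hp
    exact mem_filter.2 ⟨h.mapsTo hp, hP⟩
  · obtain ⟨hk, hP⟩ := mem_filter.1 hk
    obtain ⟨p, hp, rfl⟩ := h.surjOn hk
    exact ⟨p, mem_filter.2 ⟨hp, hP⟩, rfl⟩

theorem card_filter_boxes_fst_lt (i : ℕ) : #{p ∈ boxes lam | p.1 < i} = (lam.take i).sum := by
  rw [← card_range (lam.take i).sum, ← filter_blockIndex_lt, ← card_filter_boxes_boxIndex]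
  congr 1
  exact filter_congr fun p hp => by rw [blockIndex_boxIndex hp]

end boxes

theorem HasContent.card_filter_le {lam mu : List ℕ} {T : ℕ × ℕ → ℕ} (hC : HasContent lam T mu)
    (hpos : ∀ p ∈ boxes lam, 1 ≤ T p) (i : ℕ) : #{p ∈ boxes lam | T p ≤ i} = (mu.take i).sum := by
  induction i with
  | zero =>
    rw [List.take_zero, List.sum_nil, card_eq_zero, filter_eq_empty_iff]
    exact fun p hp => Nat.not_le_of_lt (hpos p hp)
  | succ i ih =>
    rw [sum_take_succ_eq_add_getD, ← ih, ← hC i,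
      ← card_union_of_disjoint (disjoint_filter.2 fun p _ h => by omega), ← filter_or]
    exact congrArg _ (filter_congr fun p _ => Nat.le_succ_iff)

section tableau

variable {lam mu : List ℕ} {T : ℕ × ℕ → ℕ}

theorem IsCompTableau.partialSums_subset (hT : IsCompTableau lam T) (hC : HasContent lam T mu) :
    partialSums lam ⊆ partialSums mu := by
  intro s hs
  obtain ⟨r, rfl⟩ := mem_partialSums.1 hs
  refine mem_partialSums.2 ⟨{p ∈ boxes lam | p.1 < r}.sup T, ?_⟩
  rw [← hC.card_filter_le hT.pos, ← card_filter_boxes_fst_lt]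
  refine congrArg _ (filter_congr fun q hq =>
    ⟨fun hle => ?_, fun hr => le_sup (mem_filter.2 ⟨hq, hr⟩)⟩)
  by_contra! hr
  refine hle.not_gt ((Finset.sup_lt_iff (hT.pos q hq)).2 fun p hp => ?_)
  obtain ⟨hp, hpr⟩ := mem_filter.1 hp
  exact hT.rows p hp q hq (hpr.trans_le hr)

theorem IsWeakCompTableau.dominates (hT : IsWeakCompTableau lam T) (hC : HasContent lam T mu) :
    Dominates mu lam := fun i => by
  rw [← card_filter_boxes_fst_lt, ← hC.card_filter_le hT.pos]
  exact card_le_card (monotone_filter_right _ fun p hp h => (hT.rowBound p hp).trans h)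

/-- Writes `1^{μ_1} 2^{μ_2} ⋯` into the boxes of `λ` in reading order. -/
noncomputable def readingFilling (lam mu : List ℕ) (p : ℕ × ℕ) : ℕ :=
  blockIndex mu (boxIndex lam p) + 1

theorem isWeakCompTableau_readingFilling (hsum : lam.sum = mu.sum)
    (hps : partialSums lam ⊆ partialSums mu) (hdom : Dominates mu lam) :
    IsWeakCompTableau lam (readingFilling lam mu) where
  pos _ _ := Nat.le_add_left _ _
  mono _ hp _ hq hpq := Nat.add_le_add_right
    (blockIndex_mono (hsum ▸ boxIndex_lt_sum hq) (boxIndex_le_boxIndex hp hpq)) 1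
  rows _ hp q hq hpq := Nat.add_lt_add_right
    (blockIndex_lt_blockIndex (hsum ▸ boxIndex_lt_sum hq) (hps (sum_take_mem_partialSums lam q.1))
      (boxIndex_lt_sum_take hp hpq) (Nat.le_add_right _ _)) 1
  rowBound _ hp := Nat.succ_le_succ <| Nat.lt_succ_iff.mp <|
    (blockIndex_lt_iff (hsum ▸ boxIndex_lt_sum hp) _).mpr <|
      (mem_boxes_iff_boxIndex_lt.mp hp).trans_le (hdom _)

theorem hasContent_readingFilling (hsum : lam.sum = mu.sum) :
    HasContent lam (readingFilling lam mu) mu := fun i => by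
  simp only [readingFilling, Nat.add_right_cancel_iff]
  rw [card_filter_boxes_boxIndex lam (fun k => blockIndex mu k = i), hsum,
    card_filter_blockIndex_eq]

end tableau

theorem weak_composition_tableau_content_iff (lam mu : List ℕ)
    (hsum : lam.sum = mu.sum) :
    (∃ T : ℕ × ℕ → ℕ, IsWeakCompTableau lam T ∧ HasContent lam T mu) ↔
      (Refines (flatt mu) (flatt lam) ∧ Dominates mu lam) := by
  rw [refines_flatt_iff hsum.symm]
  constructor
  · rintro ⟨T, hT, hC⟩
    exact ⟨hT.partialSums_subset hC, hT.dominates hC⟩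
  · rintro ⟨hps, hdom⟩
    exact ⟨_, isWeakCompTableau_readingFilling hsum hps hdom, hasContent_readingFilling hsum⟩
end

section
/- Let (W,S) be a Coxeter system, Q a word in the generators S, and π ∈ W such that some subsequence of Q is a reduced word for π. Then the subword complex Δ(Q,π) is vertex-decomposable. -/
/-!
STATEMENT 7: Let (W,S) be a Coxeter system, Q a word in the generators S, and π ∈ W such
that some subsequence of Q is a reduced word for π. Then the subword complex Δ(Q,π) is
vertex-decomposable.
-/

open scoped Classical

/-- `F` is a facet (inclusion-maximal face) of the abstract simplicial complex `Δ`. -/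
def IsFacet {V : Type*} (Δ : Set (Finset V)) (F : Finset V) : Prop :=
  F ∈ Δ ∧ ∀ G ∈ Δ, F ⊆ G → F = G

/-- The complex `Δ` is pure: all facets have the same cardinality. -/
def IsPure {V : Type*} (Δ : Set (Finset V)) : Prop :=
  ∀ F G : Finset V, IsFacet Δ F → IsFacet Δ G → F.card = G.card

/-- The deletion of a vertex `v` from `Δ`. -/
def complexDel {V : Type*} (Δ : Set (Finset V)) (v : V) : Set (Finset V) :=
  {G ∈ Δ | v ∉ G}

/-- The link of a vertex `v` in `Δ`. -/
def complexLink {V : Type*} (Δ : Set (Finset V)) (v : V) : Set (Finset V) :=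
  {G | v ∉ G ∧ G ∈ Δ ∧ insert v G ∈ Δ}

/-- `Δ` is vertex-decomposable: `Δ` is pure, and either `Δ = {∅}` or there is a vertex `v`
such that both the deletion and the link of `v` are vertex-decomposable. -/
inductive VertexDecomposable {V : Type*} : Set (Finset V) → Prop
  | of_empty_face : VertexDecomposable {(∅ : Finset V)}
  | step (Δ : Set (Finset V)) (v : V) : IsPure Δ →
      VertexDecomposable (complexDel Δ v) → VertexDecomposable (complexLink Δ v) →
      VertexDecomposable Δ

variable {B W : Type*} [Group W] {M : CoxeterMatrix B}

/-- The word (list of letters of `Q`, in order) at the positions of `Q` not in `P`. -/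
def complementWord (Q : List B) (P : Finset (Fin Q.length)) : List B :=
  ((List.finRange Q.length).filter (fun i => i ∉ P)).map Q.get

/-- `P` is a face of the subword complex `Δ(Q, π)`: identifying subwords of `Q` with subsets
of positions, `P` is a face iff the complementary subword `Q ∖ P` contains a reduced word
for `π` as a subsequence. -/
def SubwordComplex (cs : CoxeterSystem M W) (Q : List B) (π : W) :
    Set (Finset (Fin Q.length)) :=
  {P | ∃ w : List B, cs.IsReduced w ∧ cs.wordProd w = π ∧ w.Sublist (complementWord Q P)}

/-!
Induct on the word: write `Q = a :: Q'`. If `Q'` still contains a reduced word for `π`, the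
first position is a shedding vertex. Its link is a copy of `Δ(Q', π)` and its deletion a copy
of `Δ(Q', π')`, where `π' = sₐ π` if `a` is a left descent of `π` and `π' = π` otherwise. If
`Q'` contains no reduced word for `π`, no face contains the first position and `Δ(Q, π)` is a
copy of `Δ(Q', sₐ π)`. Purity holds because every facet has `|Q| - ℓ(π)` elements: a reduced word
that is a proper subword of `Q ∖ F` leaves a position that can be added to `F`.

The deletion step needs the exchange property. It comes from the Björner–Brenti permutation
representation of `W` on `W × ZMod 2`: the parity of the number of occurrences of `t` in the
right inversion sequence of a word depends only on the product of the word. So a right descent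
`s` of `π ω` occurs in the inversion sequence of `ω`, and deleting the corresponding letter of
`ω` gives a word for `π ω * s`.
-/

section ImageUnderEmbedding

variable {V V' : Type*} (e : V ↪ V')

theorem isFacet_image_map_iff {Δ : Set (Finset V)} {F : Finset V} :
    IsFacet (Finset.map e '' Δ) (F.map e) ↔ IsFacet Δ F := by
  simp only [IsFacet, Set.forall_mem_image, (Finset.map_injective e).mem_set_image,
    Finset.map_subset_map, (Finset.map_injective e).eq_iff]

theorem IsPure.image_map {Δ : Set (Finset V)} (h : IsPure Δ) : IsPure (Finset.map e '' Δ) := by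
  intro F' G' hF hG
  obtain ⟨F, -, rfl⟩ := hF.1
  obtain ⟨G, -, rfl⟩ := hG.1
  rw [Finset.card_map, Finset.card_map]
  exact h F G ((isFacet_image_map_iff e).1 hF) ((isFacet_image_map_iff e).1 hG)

theorem complexDel_image_map (Δ : Set (Finset V)) (v : V) :
    complexDel (Finset.map e '' Δ) (e v) = Finset.map e '' complexDel Δ v := by
  ext G'
  constructor
  · rintro ⟨⟨G, hG, rfl⟩, hv⟩
    exact ⟨G, ⟨hG, by simpa using hv⟩, rfl⟩
  · rintro ⟨G, ⟨hG, hv⟩, rfl⟩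
    exact ⟨⟨G, hG, rfl⟩, by simpa using hv⟩

theorem complexLink_image_map (Δ : Set (Finset V)) (v : V) :
    complexLink (Finset.map e '' Δ) (e v) = Finset.map e '' complexLink Δ v := by
  ext G'
  constructor
  · rintro ⟨hv, ⟨G, hG, rfl⟩, hins⟩
    rw [← Finset.map_insert, (Finset.map_injective e).mem_set_image] at hins
    exact ⟨G, ⟨by simpa using hv, hG, hins⟩, rfl⟩
  · rintro ⟨G, ⟨hv, hG, hins⟩, rfl⟩
    refine ⟨by simpa using hv, ⟨G, hG, rfl⟩, ?_⟩
    rw [← Finset.map_insert]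
    exact ⟨_, hins, rfl⟩

theorem VertexDecomposable.image_map {Δ : Set (Finset V)} (h : VertexDecomposable Δ) :
    VertexDecomposable (Finset.map e '' Δ) := by
  induction h with
  | of_empty_face =>
    rw [Set.image_singleton, Finset.map_empty]
    exact .of_empty_face
  | step Δ v hpure _ _ ihdel ihlink =>
    refine .step _ (e v) (hpure.image_map e) ?_ ?_
    · rwa [complexDel_image_map]
    · rwa [complexLink_image_map]

end ImageUnderEmbedding

namespace CoxeterSystem

variable (cs : CoxeterSystem M W)

local prefix:100 "s " => cs.simple
local prefix:100 "π " => cs.wordProd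
local prefix:100 "ris " => cs.rightInvSeq

theorem simple_mul_mul_simple_eq_simple_iff (i : B) (t : W) :
    s i * t * s i = s i ↔ t = s i := by
  constructor
  · intro h
    simpa [mul_assoc] using congrArg (s i * · * s i) h
  · rintro rfl
    simp

noncomputable def reflectionPerm (i : B) : Equiv.Perm (W × ZMod 2) :=
  Function.Involutive.toPerm
    (fun p => (s i * p.1 * s i, if p.1 = s i then p.2 + 1 else p.2))
    (by
      rintro ⟨t, ε⟩
      by_cases ht : t = s i
      · subst ht
        simp [add_assoc, show (1 + 1 : ZMod 2) = 0 from rfl]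
      · have ht' : s i * t * s i ≠ s i := (cs.simple_mul_mul_simple_eq_simple_iff i t).not.2 ht
        simp only [if_neg ht, if_neg ht']
        simp [mul_assoc])

theorem reflectionPerm_apply (i : B) (t : W) (ε : ZMod 2) :
    cs.reflectionPerm i (t, ε) = (s i * t * s i, if t = s i then ε + 1 else ε) := rfl

theorem prod_map_reflectionPerm_apply (ω : List B) (t : W) (ε : ZMod 2) :
    (ω.map cs.reflectionPerm).prod (t, ε) =
      (π ω * t * (π ω)⁻¹, ε + ((ris ω).count t : ZMod 2)) := by
  induction ω with
  | nil => simp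
  | cons i ω ih =>
    have hconj : π ω * t * (π ω)⁻¹ = s i ↔ (π ω)⁻¹ * s i * π ω = t := by
      constructor <;> intro h <;> rw [← h] <;> group
    rw [List.map_cons, List.prod_cons, Equiv.Perm.mul_apply, ih, reflectionPerm_apply,
      rightInvSeq, List.count_cons, hconj, cs.wordProd_cons]
    refine Prod.ext ?_ ?_
    · simp only [mul_inv_rev, inv_simple]
      group
    · simp only [beq_iff_eq]
      split_ifs <;> simp [add_assoc]

theorem rightInvSeq_alternatingWord (i j : B) (n : ℕ) :
    ris (alternatingWord i j n) =
      (List.range n).reverse.map (fun q => (s j * s i) ^ q * s j) := by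
  induction n generalizing i j with
  | zero => simp [alternatingWord]
  | succ n ih =>
    rw [alternatingWord_succ, rightInvSeq_concat, ih, List.range_succ_eq_map, List.reverse_cons]
    simp only [List.map_append, List.map_reverse, List.map_map, List.map_cons, List.map_nil,
      List.concat_eq_append]
    congr 3
    · funext q
      simp only [Function.comp_apply, MulAut.conj_apply, inv_simple, Nat.succ_eq_add_one,
        pow_succ', mul_assoc]
      rw [← mul_assoc (s i), ← mul_pow_mul, mul_assoc]
    · simp

theorem even_count_rightInvSeq_alternatingWord (i j : B) (t : W) :
    Even ((ris (alternatingWord i j (2 * M i j))).count t) := by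
  rw [rightInvSeq_alternatingWord, List.map_reverse, List.count_reverse, two_mul,
    List.range_add, List.map_append, List.count_append, List.map_map]
  have hperiodic :
      (fun q => (s j * s i) ^ q * s j) ∘ (M i j + ·) = fun q => (s j * s i) ^ q * s j := by
    funext q
    simp [pow_add]
  rw [hperiodic]
  exact ⟨_, rfl⟩

theorem prod_map_reflectionPerm_alternatingWord (i j : B) (m : ℕ) :
    ((alternatingWord i j (2 * m)).map cs.reflectionPerm).prod =
      (cs.reflectionPerm i * cs.reflectionPerm j) ^ m := by
  induction m with
  | zero => simp [alternatingWord]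
  | succ m ih =>
    rw [show 2 * (m + 1) = 2 * m + 1 + 1 by ring, alternatingWord_succ', alternatingWord_succ',
      if_neg (by simp [parity_simps]), if_pos (by simp)]
    simp [ih, pow_succ', mul_assoc]

theorem isLiftable_reflectionPerm : M.IsLiftable cs.reflectionPerm := by
  intro i j
  rw [← prod_map_reflectionPerm_alternatingWord]
  ext1 ⟨t, ε⟩
  obtain ⟨c, hc⟩ := cs.even_count_rightInvSeq_alternatingWord i j t
  have hprod : π (alternatingWord i j (2 * M i j)) = 1 := by
    simp [prod_alternatingWord_eq_mul_pow]
  rw [prod_map_reflectionPerm_apply, hprod, hc]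
  simp [← two_mul, show (2 : ZMod 2) = 0 from rfl]

noncomputable def reflectionRep : W →* Equiv.Perm (W × ZMod 2) :=
  cs.lift ⟨cs.reflectionPerm, cs.isLiftable_reflectionPerm⟩

theorem reflectionRep_wordProd (ω : List B) :
    cs.reflectionRep (π ω) = (ω.map cs.reflectionPerm).prod := by
  rw [wordProd, map_list_prod, List.map_map]
  congr 2
  funext i
  exact cs.lift_apply_simple _ i

theorem natCast_count_rightInvSeq_eq_of_wordProd_eq {ω ω' : List B} (h : π ω = π ω') (t : W) :
    ((ris ω).count t : ZMod 2) = (ris ω').count t := by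
  have key := congrArg (fun f => (f (t, 0)).2) (congrArg cs.reflectionRep h)
  simpa [reflectionRep_wordProd, prod_map_reflectionPerm_apply] using key

theorem simple_mem_rightInvSeq_of_isRightDescent {ω : List B} {i : B}
    (h : cs.IsRightDescent (π ω) i) : s i ∈ ris ω := by
  obtain ⟨τ, hτ, hτω⟩ := cs.exists_isReduced (π ω * s i)
  have hprod : π (τ.concat i) = π ω := by
    rw [wordProd_concat, ← hτω, simple_mul_simple_cancel_right]
  have hred : cs.IsReduced (τ.concat i) := by
    have hlen :=
      (cs.length_mul_simple (π ω) i).resolve_left (by unfold IsRightDescent at h; omega)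
    unfold IsReduced
    rw [hprod, List.length_concat, ← hτ.eq, ← hτω, hlen]
  have hcount : (ris (τ.concat i)).count (s i) = 1 :=
    List.count_eq_one_of_mem hred.nodup_rightInvSeq (by rw [rightInvSeq_concat]; simp)
  have hparity := cs.natCast_count_rightInvSeq_eq_of_wordProd_eq hprod (s i)
  by_contra hnot
  rw [hcount, List.count_eq_zero_of_not_mem hnot] at hparity
  exact absurd hparity (by decide)

theorem simple_mem_leftInvSeq_of_isLeftDescent {ω : List B} {i : B}
    (h : cs.IsLeftDescent (π ω) i) : s i ∈ cs.leftInvSeq ω := by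
  have hrev : s i ∈ ris ω.reverse := cs.simple_mem_rightInvSeq_of_isRightDescent
    (by rwa [wordProd_reverse, isRightDescent_inv_iff])
  simpa [rightInvSeq_reverse] using hrev

/-- The left exchange property, in the form of a subword. -/
theorem exists_isReduced_sublist_of_isLeftDescent {ω : List B} (hω : cs.IsReduced ω) {i : B}
    (h : cs.IsLeftDescent (π ω) i) :
    ∃ u, cs.IsReduced u ∧ π u = s i * π ω ∧ u.Sublist ω := by
  obtain ⟨j, hj, hji⟩ := List.getElem_of_mem (cs.simple_mem_leftInvSeq_of_isLeftDescent h)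
  have hprod : π (ω.eraseIdx j) = s i * π ω := by
    rw [← getD_leftInvSeq_mul_wordProd, List.getD_eq_getElem _ _ hj, hji]
  refine ⟨ω.eraseIdx j, ?_, hprod, List.eraseIdx_sublist _ _⟩
  have hlen := (cs.length_simple_mul (π ω) i).resolve_left (by unfold IsLeftDescent at h; omega)
  rw [length_leftInvSeq] at hj
  unfold IsReduced
  rw [hprod, List.length_eraseIdx_of_lt hj, ← hω.eq]
  omega

theorem isReduced_cons_iff (a : B) (ω : List B) :
    cs.IsReduced (a :: ω) ↔ cs.IsReduced ω ∧ ¬cs.IsLeftDescent (π ω) a := by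
  unfold IsReduced IsLeftDescent
  have hle := cs.length_wordProd_le ω
  rw [wordProd_cons, List.length_cons]
  rcases cs.length_simple_mul (π ω) a with h | h <;> omega

theorem isLeftDescent_wordProd_cons {a : B} {ω : List B} (h : cs.IsReduced (a :: ω)) :
    cs.IsLeftDescent (π (a :: ω)) a := by
  rw [wordProd_cons, isLeftDescent_iff_not_isLeftDescent_mul, simple_mul_simple_cancel_left]
  exact ((cs.isReduced_cons_iff a ω).1 h).2

def ContainsReducedWord (w : W) (L : List B) : Prop :=
  ∃ ω : List B, cs.IsReduced ω ∧ π ω = w ∧ ω.Sublist L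

variable {cs}

theorem ContainsReducedWord.mono {w : W} {L L' : List B} (h : cs.ContainsReducedWord w L)
    (hL : L.Sublist L') : cs.ContainsReducedWord w L' :=
  let ⟨ω, hω, hωw, hωL⟩ := h
  ⟨ω, hω, hωw, hωL.trans hL⟩

theorem containsReducedWord_cons_iff_of_isLeftDescent {w : W} {a : B}
    (h : cs.IsLeftDescent w a) (L : List B) :
    cs.ContainsReducedWord w (a :: L) ↔ cs.ContainsReducedWord (s a * w) L := by
  constructor
  · rintro ⟨ω, hω, rfl, hωL⟩
    rcases List.sublist_cons_iff.1 hωL with hωL | ⟨r, rfl, hrL⟩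
    · obtain ⟨u, hu, huω, huω'⟩ := cs.exists_isReduced_sublist_of_isLeftDescent hω h
      exact ⟨u, hu, huω, huω'.trans hωL⟩
    · exact ⟨r, ((cs.isReduced_cons_iff a r).1 hω).1, by simp [wordProd_cons], hrL⟩
  · rintro ⟨u, hu, hua, huL⟩
    have hw : w = π (a :: u) := by simp [wordProd_cons, hua]
    refine ⟨a :: u, (cs.isReduced_cons_iff a u).2 ⟨hu, ?_⟩, hw.symm, huL.cons_cons a⟩
    rwa [hw, wordProd_cons, isLeftDescent_iff_not_isLeftDescent_mul,
      simple_mul_simple_cancel_left] at h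

theorem containsReducedWord_cons_iff_of_not_isLeftDescent {w : W} {a : B}
    (h : ¬cs.IsLeftDescent w a) (L : List B) :
    cs.ContainsReducedWord w (a :: L) ↔ cs.ContainsReducedWord w L := by
  refine ⟨?_, fun hL => hL.mono (L.sublist_cons_self a)⟩
  rintro ⟨ω, hω, rfl, hωL⟩
  rcases List.sublist_cons_iff.1 hωL with hωL | ⟨r, rfl, -⟩
  · exact ⟨ω, hω, rfl, hωL⟩
  · exact absurd (cs.isLeftDescent_wordProd_cons hω) h

theorem containsReducedWord_cons_iff (w : W) (a : B) (L : List B) :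
    cs.ContainsReducedWord w (a :: L) ↔
      cs.ContainsReducedWord (if cs.IsLeftDescent w a then s a * w else w) L := by
  split_ifs with h
  · exact containsReducedWord_cons_iff_of_isLeftDescent h L
  · exact containsReducedWord_cons_iff_of_not_isLeftDescent h L

end CoxeterSystem

theorem Fin.exists_eq_map_succEmb_of_zero_notMem {n : ℕ} {P : Finset (Fin (n + 1))}
    (h : 0 ∉ P) : ∃ P' : Finset (Fin n), P = P'.map (Fin.succEmb n) := by
  have hP : P ⊆ Finset.univ.map (Fin.succEmb n) := by
    intro i hi
    rw [← Fin.Ioi_zero_eq_map, Finset.mem_Ioi, Fin.pos_iff_ne_zero]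
    exact ne_of_mem_of_not_mem hi h
  obtain ⟨P', -, rfl⟩ := Finset.subset_map_iff.1 hP
  exact ⟨P', rfl⟩

theorem complementWord_cons (a : B) (Q : List B) (P : Finset (Fin (Q.length + 1)))
    (P' : Finset (Fin Q.length)) (hP : ∀ i, i.succ ∈ P ↔ i ∈ P') :
    complementWord (a :: Q) P = (if 0 ∈ P then [] else [a]) ++ complementWord Q P' := by
  unfold complementWord
  change List.map (a :: Q).get ((List.finRange (Q.length + 1)).filter _) = _
  rw [List.finRange_succ, List.filter_cons, List.filter_map]
  by_cases h0 : 0 ∈ P <;> simp [Function.comp_def, hP, h0]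

theorem complementWord_cons_map_succ (a : B) (Q : List B) (P : Finset (Fin Q.length)) :
    complementWord (a :: Q) (P.map (Fin.succEmb _)) = a :: complementWord Q P := by
  rw [complementWord_cons a Q _ P (fun i => by simp)]
  simp

-- The instance is left arbitrary so that the lemma also rewrites the classical one that
-- `complexLink` uses.
theorem complementWord_cons_insert_zero (a : B) (Q : List B) [DecidableEq (Fin (Q.length + 1))]
    (P : Finset (Fin Q.length)) :
    complementWord (a :: Q) (insert 0 (P.map (Fin.succEmb _))) = complementWord Q P := by
  rw [complementWord_cons a Q _ P (fun i => by simp [Fin.succ_ne_zero])]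
  simp

theorem complementWord_sublist (Q : List B) (P : Finset (Fin Q.length)) :
    (complementWord Q P).Sublist Q := by
  have h := (List.filter_sublist (p := (· ∉ P)) (l := List.finRange Q.length)).map Q.get
  rwa [List.map_get_finRange] at h

theorem complementWord_length (Q : List B) (P : Finset (Fin Q.length)) :
    (complementWord Q P).length = Q.length - P.card := by
  have hcompl : ((List.finRange Q.length).filter (· ∉ P)).toFinset = Pᶜ := by
    ext
    simp
  rw [complementWord, List.length_map,
    ← List.toFinset_card_of_nodup ((List.nodup_finRange _).filter _), hcompl,
    Finset.card_compl, Fintype.card_fin]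

theorem exists_notMem_sublist_complementWord_insert {Q : List B} {P : Finset (Fin Q.length)}
    {ω : List B} (hω : ω.Sublist (complementWord Q P))
    (hlt : ω.length < (complementWord Q P).length) :
    ∃ i ∉ P, ω.Sublist (complementWord Q (insert i P)) := by
  obtain ⟨l₀, hl₀, rfl⟩ := List.sublist_map_iff.1 hω
  set l := (List.finRange Q.length).filter (· ∉ P)
  obtain ⟨i, hil, hil₀⟩ : ∃ i ∈ l, i ∉ l₀ := by
    by_contra! h
    have := (List.subperm_of_subset ((List.nodup_finRange _).filter _) h).length_le
    simp only [complementWord, List.length_map] at hlt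
    omega
  refine ⟨i, by simpa [l] using hil, ?_⟩
  have hl₀i : l₀.Sublist (l.filter (· ≠ i)) := by
    have := hl₀.filter (· ≠ i)
    rwa [List.filter_eq_self.2 (fun x hx => by simpa using ne_of_mem_of_not_mem hx hil₀)] at this
  unfold complementWord
  convert hl₀i.map Q.get using 2
  rw [List.filter_filter]
  congr 1
  funext x
  simp

section SubwordComplex

variable (cs : CoxeterSystem M W)

theorem mem_subwordComplex_iff {Q : List B} {π : W} {P : Finset (Fin Q.length)} :
    P ∈ SubwordComplex cs Q π ↔ cs.ContainsReducedWord π (complementWord Q P) :=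
  Iff.rfl

theorem card_eq_of_isFacet_subwordComplex {Q : List B} {π : W} {F : Finset (Fin Q.length)}
    (hF : IsFacet (SubwordComplex cs Q π) F) : F.card = Q.length - cs.length π := by
  obtain ⟨⟨ω, hω, rfl, hωF⟩, hmax⟩ := hF
  have hlen : ω.length = (complementWord Q F).length := by
    refine hωF.length_le.eq_of_not_lt fun hlt => ?_
    obtain ⟨i, hiF, hωi⟩ := exists_notMem_sublist_complementWord_insert hωF hlt
    have hmaxF := hmax _ ⟨ω, hω, rfl, hωi⟩ (Finset.subset_insert i F)
    exact hiF (hmaxF ▸ Finset.mem_insert_self i F)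
  have hFQ : F.card ≤ Q.length := by simpa using F.card_le_univ
  rw [hω.eq, hlen, complementWord_length]
  omega

theorem isPure_subwordComplex (Q : List B) (π : W) : IsPure (SubwordComplex cs Q π) :=
  fun _ _ hF hG => by
    rw [card_eq_of_isFacet_subwordComplex cs hF, card_eq_of_isFacet_subwordComplex cs hG]

theorem subwordComplex_nil {π : W} (h : cs.ContainsReducedWord π []) :
    SubwordComplex cs [] π = {∅} := by
  ext P
  obtain rfl : P = ∅ := Finset.eq_empty_of_forall_notMem fun i => i.elim0
  exact iff_of_true h rfl

theorem complexLink_subwordComplex_cons_zero (a : B) (Q : List B) (π : W) :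
    complexLink (SubwordComplex cs (a :: Q) π) (0 : Fin (Q.length + 1)) =
      Finset.map (Fin.succEmb _) '' SubwordComplex cs Q π := by
  ext P
  constructor
  · rintro ⟨h0, -, hins⟩
    obtain ⟨P', rfl⟩ := Fin.exists_eq_map_succEmb_of_zero_notMem h0
    refine ⟨P', ?_, rfl⟩
    rwa [mem_subwordComplex_iff, complementWord_cons_insert_zero] at hins
  · rintro ⟨P', hP', rfl⟩
    refine ⟨by simp, ?_, ?_⟩
    · rw [mem_subwordComplex_iff, complementWord_cons_map_succ]
      exact CoxeterSystem.ContainsReducedWord.mono hP' (List.sublist_cons_self _ _)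
    · rwa [mem_subwordComplex_iff, complementWord_cons_insert_zero]

theorem complexDel_subwordComplex_cons_zero (a : B) (Q : List B) (π : W) :
    complexDel (SubwordComplex cs (a :: Q) π) (0 : Fin (Q.length + 1)) =
      Finset.map (Fin.succEmb _) ''
        SubwordComplex cs Q (if cs.IsLeftDescent π a then cs.simple a * π else π) := by
  ext P
  constructor
  · rintro ⟨hP, h0⟩
    obtain ⟨P', rfl⟩ := Fin.exists_eq_map_succEmb_of_zero_notMem h0
    rw [mem_subwordComplex_iff, complementWord_cons_map_succ,
      CoxeterSystem.containsReducedWord_cons_iff] at hP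
    exact ⟨P', hP, rfl⟩
  · rintro ⟨P', hP', rfl⟩
    refine ⟨?_, by simp⟩
    rwa [mem_subwordComplex_iff, complementWord_cons_map_succ,
      CoxeterSystem.containsReducedWord_cons_iff]

/-- Every reduced word for `π` inside `a :: Q` uses the first letter, so no face contains the
first position. -/
theorem complexDel_subwordComplex_cons_zero_eq_self {a : B} {Q : List B} {π : W}
    (h : ¬cs.ContainsReducedWord π Q) :
    complexDel (SubwordComplex cs (a :: Q) π) (0 : Fin (Q.length + 1)) =
      SubwordComplex cs (a :: Q) π := by
  refine Set.sep_eq_self_iff_mem_true.2 fun P hP h0 => h ?_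
  obtain ⟨P', hP'⟩ := Fin.exists_eq_map_succEmb_of_zero_notMem (Finset.notMem_erase 0 P)
  rw [mem_subwordComplex_iff, ← Finset.insert_erase h0, hP',
    complementWord_cons_insert_zero] at hP
  exact hP.mono (complementWord_sublist Q P')

end SubwordComplex

theorem subwordComplex_vertexDecomposable (cs : CoxeterSystem M W) (Q : List B) (π : W)
    (hQ : ∃ w : List B, cs.IsReduced w ∧ cs.wordProd w = π ∧ w.Sublist Q) :
    VertexDecomposable (SubwordComplex cs Q π) := by
  induction Q generalizing π with
  | nil =>
    rw [subwordComplex_nil cs hQ]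
    exact .of_empty_face
  | cons a Q ih =>
    have hdel : VertexDecomposable (complexDel (SubwordComplex cs (a :: Q) π) 0) := by
      rw [complexDel_subwordComplex_cons_zero]
      exact (ih _ ((cs.containsReducedWord_cons_iff π a Q).1 hQ)).image_map _
    by_cases hQπ : cs.ContainsReducedWord π Q
    · refine .step _ 0 (isPure_subwordComplex cs _ π) hdel ?_
      rw [complexLink_subwordComplex_cons_zero]
      exact (ih π hQπ).image_map _
    · rwa [← complexDel_subwordComplex_cons_zero_eq_self cs hQπ]
end

section
/- Let (W,S) be a Coxeter system, Q a word of length m in the generators S, π ∈ W with ℓ(π) = ℓ, and W a set of reduced words for π such that some subsequence of Q lies in W. Then every facet of Δ_W(Q,π) has cardinality m − ℓ, and every face of Δ_W(Q,π) of cardinality m − ℓ − 1 is contained in at most two facets of Δ_W(Q,π). -/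
/-!
STATEMENT 9: Let (W,S) be a Coxeter system, Q a word of length m in the generators S,
π ∈ W with ℓ(π) = ℓ, and 𝒲 a set of reduced words for π such that some subsequence of Q
lies in 𝒲. Then every facet of Δ_𝒲(Q,π) has cardinality m − ℓ, and every face of
Δ_𝒲(Q,π) of cardinality m − ℓ − 1 is contained in at most two facets of Δ_𝒲(Q,π).
-/

open scoped Classical

variable {B W : Type*} [Group W] {M : CoxeterMatrix B}

/-- The complex `Δ_𝒲(Q,π)`. -/
def DeltaW (Ws : Set (List B)) (Q : List B) : Set (Finset (Fin Q.length)) :=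
  {P | ∃ w ∈ Ws, w.Sublist (complementWord Q P)}

/-!
Every word of `𝒲` has length `ℓ`. The complement word of a facet contains a word of `𝒲` and,
by maximality, equals it, so facets have `m - ℓ` elements. A facet containing a face `G` with
`m - ℓ - 1` elements adds one position to `G`, i.e. deletes one letter from the complement word
`c` of `G` so as to leave a reduced word for `π`. If this works for positions `i < n` of `c`,
then the `i`-th entry of the left inversion sequence of `c` is also the `(n - 1)`-st entry of the
left inversion sequence of `c` with letter `i` deleted. That word is reduced, so its inversion
sequence has no repetitions: besides the smallest good position at most one more can work.
-/

namespace List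

theorem eraseIdx_eraseIdx_of_lt {α : Type*} {l : List α} {i j : ℕ} (h : i < j) :
    (l.eraseIdx j).eraseIdx i = (l.eraseIdx i).eraseIdx (j - 1) := by
  induction l generalizing i j with
  | nil => simp
  | cons a t ih =>
    obtain ⟨j, rfl⟩ : ∃ j', j = j' + 1 := ⟨j - 1, by omega⟩
    cases i with
    | zero => simp
    | succ i =>
      obtain ⟨j, rfl⟩ : ∃ j', j = j' + 1 := ⟨j - 1, by omega⟩
      simp [ih (show i < j + 1 by omega)]

theorem Sublist.exists_sublist_eraseIdx {α : Type*} {l₁ l₂ : List α} (h : l₁ <+ l₂)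
    (hlen : l₁.length < l₂.length) : ∃ i < l₂.length, l₁ <+ l₂.eraseIdx i := by
  induction h with
  | slnil => simp at hlen
  | cons a h => exact ⟨0, by simp, by simpa using h⟩
  | cons_cons a _ ih =>
    obtain ⟨i, hi, hs⟩ := ih (by simpa using hlen)
    exact ⟨i + 1, by simpa using hi, by simpa using hs.cons_cons a⟩

end List

namespace CoxeterSystem

variable (cs : CoxeterSystem M W)

theorem getD_leftInvSeq_eraseIdx_of_lt (ω : List B) {i n : ℕ} (hin : i < n) :
    (cs.leftInvSeq (ω.eraseIdx n)).getD i 1 = (cs.leftInvSeq ω).getD i 1 := by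
  have htake : (cs.leftInvSeq (ω.eraseIdx n)).take n = (cs.leftInvSeq ω).take n := by
    rw [← leftInvSeq_take, ← leftInvSeq_take, List.take_eraseIdx_eq_take_of_le _ _ _ le_rfl]
  have := congrArg (fun l => l.getD i 1) htake
  simpa [List.getD_eq_getElem?_getD, List.getElem?_take, hin] using this

/-- Both sides, multiplied by `π (ω.eraseIdx i)`, give the product of `ω` with positions `i` and
`n` deleted. -/
theorem getD_leftInvSeq_eraseIdx_of_wordProd_eq (ω : List B) {i n : ℕ} (hin : i < n)
    (h : cs.wordProd (ω.eraseIdx n) = cs.wordProd (ω.eraseIdx i)) :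
    (cs.leftInvSeq (ω.eraseIdx i)).getD (n - 1) 1 = (cs.leftInvSeq ω).getD i 1 := by
  apply mul_right_cancel (b := cs.wordProd (ω.eraseIdx i))
  rw [getD_leftInvSeq_mul_wordProd, ← List.eraseIdx_eraseIdx_of_lt hin, ← h,
    ← getD_leftInvSeq_eraseIdx_of_lt cs ω hin, getD_leftInvSeq_mul_wordProd]

theorem card_filter_eraseIdx_isReduced_le_two (ω : List B) (π : W) :
    ((Finset.range ω.length).filter fun n =>
      cs.IsReduced (ω.eraseIdx n) ∧ cs.wordProd (ω.eraseIdx n) = π).card ≤ 2 := by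
  set T := (Finset.range ω.length).filter fun n =>
    cs.IsReduced (ω.eraseIdx n) ∧ cs.wordProd (ω.eraseIdx n) = π
  rcases T.eq_empty_or_nonempty with hT | hT
  · simp [hT]
  set i := T.min' hT
  obtain ⟨hi, hi_red, hi_prod⟩ : i < ω.length ∧ cs.IsReduced (ω.eraseIdx i) ∧
      cs.wordProd (ω.eraseIdx i) = π := by
    simpa [T] using T.min'_mem hT
  have h_above : (T.filter (i < ·)).card ≤ 1 := by
    rw [Finset.card_le_one]
    intro j hj k hk
    simp only [T, Finset.mem_filter, Finset.mem_range] at hj hk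
    have hlen : (cs.leftInvSeq (ω.eraseIdx i)).length = ω.length - 1 := by
      rw [length_leftInvSeq, List.length_eraseIdx_of_lt hi]
    have hjk : (cs.leftInvSeq (ω.eraseIdx i))[j - 1]'(by omega) =
        (cs.leftInvSeq (ω.eraseIdx i))[k - 1]'(by omega) := by
      rw [← List.getD_eq_getElem _ 1, ← List.getD_eq_getElem _ 1,
        getD_leftInvSeq_eraseIdx_of_wordProd_eq cs ω hj.2 (hj.1.2.2.trans hi_prod.symm),
        getD_leftInvSeq_eraseIdx_of_wordProd_eq cs ω hk.2 (hk.1.2.2.trans hi_prod.symm)]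
    have := hi_red.nodup_leftInvSeq.getElem_inj_iff.mp hjk
    omega
  have h_sub : T ⊆ insert i (T.filter (i < ·)) := by
    intro n hn
    rcases (T.min'_le n hn).lt_or_eq with h | h
    · exact Finset.mem_insert_of_mem (Finset.mem_filter.mpr ⟨hn, h⟩)
    · exact h ▸ Finset.mem_insert_self _ _
  calc T.card ≤ (insert i (T.filter (i < ·))).card := Finset.card_le_card h_sub
    _ ≤ (T.filter (i < ·)).card + 1 := Finset.card_insert_le _ _
    _ ≤ 2 := by omega

end CoxeterSystem

def complementPositions (Q : List B) (P : Finset (Fin Q.length)) : List (Fin Q.length) :=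
  (List.finRange Q.length).filter (fun i => i ∉ P)

section ComplementWord

variable (Q : List B) (P : Finset (Fin Q.length))

theorem complementWord_eq_map : complementWord Q P = (complementPositions Q P).map Q.get := rfl

theorem nodup_complementPositions : (complementPositions Q P).Nodup :=
  (List.nodup_finRange _).filter _

theorem mem_complementPositions {x : Fin Q.length} : x ∈ complementPositions Q P ↔ x ∉ P := by
  simp [complementPositions]

theorem length_complementPositions : (complementPositions Q P).length = Q.length - P.card := by
  rw [← (nodup_complementPositions Q P).dedup, ← List.card_toFinset]
  have : (complementPositions Q P).toFinset = Pᶜ := by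
    ext x
    simp [mem_complementPositions]
  rw [this, Finset.card_compl, Fintype.card_fin]

theorem length_complementWord : (complementWord Q P).length = Q.length - P.card := by
  rw [complementWord_eq_map, List.length_map, length_complementPositions]

theorem complementPositions_insert (x : Fin Q.length) :
    complementPositions Q (insert x P) = (complementPositions Q P).erase x := by
  rw [(nodup_complementPositions Q P).erase_eq_filter, complementPositions, complementPositions,
    List.filter_filter]
  congr 1
  ext y
  by_cases hy : y = x <;> simp [hy]

theorem complementWord_insert (x : Fin Q.length) :
    complementWord Q (insert x P) =
      (complementWord Q P).eraseIdx ((complementPositions Q P).idxOf x) := by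
  rw [complementWord_eq_map, complementWord_eq_map, complementPositions_insert,
    List.erase_eq_eraseIdx_of_idxOf rfl, List.eraseIdx_map]

end ComplementWord

section Facets

variable {Ws : Set (List B)} {Q : List B}

/-- If `w` were shorter than the complement word of the facet `F`, deleting one more letter
would keep `w` as a subword and give a larger face. -/
theorem complementWord_mem_of_isFacet {F : Finset (Fin Q.length)} (hF : IsFacet (DeltaW Ws Q) F) :
    complementWord Q F ∈ Ws := by
  obtain ⟨⟨w, hw, hsub⟩, hmax⟩ := hF
  suffices w = complementWord Q F from this ▸ hw
  by_contra hne
  have hlt : w.length < (complementWord Q F).length :=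
    hsub.length_le.lt_of_ne fun h => hne (hsub.eq_of_length h)
  obtain ⟨i, hi, hsub'⟩ := hsub.exists_sublist_eraseIdx hlt
  rw [complementWord_eq_map, List.length_map] at hi
  set x := (complementPositions Q F)[i]
  have hxF : x ∉ F := (mem_complementPositions Q F).mp (List.getElem_mem hi)
  have hface : insert x F ∈ DeltaW Ws Q := by
    refine ⟨w, hw, ?_⟩
    rwa [complementWord_insert, (nodup_complementPositions Q F).idxOf_getElem]
  exact hxF (hmax _ hface (Finset.subset_insert x F) ▸ Finset.mem_insert_self x F)

theorem card_of_isFacet {ℓ : ℕ} (hlen : ∀ w ∈ Ws, w.length = ℓ) {F : Finset (Fin Q.length)}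
    (hF : IsFacet (DeltaW Ws Q) F) : F.card = Q.length - ℓ := by
  have h := hlen _ (complementWord_mem_of_isFacet hF)
  have hF_le : F.card ≤ Q.length := by simpa using F.card_le_univ
  rw [length_complementWord] at h
  omega

theorem ncard_isFacet_le_one {ℓ : ℕ} (hlen : ∀ w ∈ Ws, w.length = ℓ) (hQ : Q.length ≤ ℓ) :
    {F | IsFacet (DeltaW Ws Q) F}.ncard ≤ 1 := by
  rw [Set.ncard_le_one]
  intro F hF F' hF'
  have hF_card := card_of_isFacet hlen hF
  have hF'_card := card_of_isFacet hlen hF'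
  rw [Finset.card_eq_zero.mp (by omega : F.card = 0),
    Finset.card_eq_zero.mp (by omega : F'.card = 0)]

theorem ncard_isFacet_superset_le_two (cs : CoxeterSystem M W) {π : W}
    (hred : ∀ w ∈ Ws, cs.IsReduced w ∧ cs.wordProd w = π) {G : Finset (Fin Q.length)}
    (hG : G.card + 1 = Q.length - cs.length π) :
    {F | IsFacet (DeltaW Ws Q) F ∧ G ⊆ F}.ncard ≤ 2 := by
  have hlen : ∀ w ∈ Ws, w.length = cs.length π := fun w hw => (hred w hw).2 ▸ (hred w hw).1.symm
  set l := complementPositions Q G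
  set c := complementWord Q G
  set X := {x | x ∉ G ∧ c.eraseIdx (l.idxOf x) ∈ Ws}
  have h_facets : {F | IsFacet (DeltaW Ws Q) F ∧ G ⊆ F} ⊆ (insert · G) '' X := by
    rintro F ⟨hF, hGF⟩
    obtain ⟨x, hxG, rfl⟩ :=
      Finset.exists_eq_insert_iff.mpr ⟨hGF, by rw [card_of_isFacet hlen hF, hG]⟩
    exact ⟨x, ⟨hxG, complementWord_insert Q G x ▸ complementWord_mem_of_isFacet hF⟩, rfl⟩
  have h_mapsTo : ∀ x ∈ X, l.idxOf x ∈ (Finset.range c.length).filter fun n =>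
      cs.IsReduced (c.eraseIdx n) ∧ cs.wordProd (c.eraseIdx n) = π := by
    rintro x ⟨hxG, hx⟩
    refine Finset.mem_filter.mpr ⟨Finset.mem_range.mpr ?_, hred _ hx⟩
    show _ < (l.map Q.get).length
    rw [List.length_map]
    exact List.idxOf_lt_length_iff.mpr ((mem_complementPositions Q G).mpr hxG)
  have h_injOn : Set.InjOn l.idxOf X := fun x hx y _ hxy =>
    (List.idxOf_inj ((mem_complementPositions Q G).mpr hx.1)).mp hxy
  calc _ ≤ ((insert · G) '' X).ncard := Set.ncard_le_ncard h_facets (Set.toFinite _)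
    _ ≤ X.ncard := Set.ncard_image_le (Set.toFinite _)
    _ ≤ _ := Set.ncard_le_ncard_of_injOn _ h_mapsTo h_injOn
    _ = _ := Set.ncard_coe_finset _
    _ ≤ 2 := cs.card_filter_eraseIdx_isReduced_le_two c π

end Facets

theorem deltaW_facets_and_thinness_general (cs : CoxeterSystem M W) (Q : List B) (π : W)
    (Ws : Set (List B))
    (hred : ∀ w ∈ Ws, cs.IsReduced w ∧ cs.wordProd w = π) :
    (∀ F : Finset (Fin Q.length), IsFacet (DeltaW Ws Q) F →
      F.card = Q.length - cs.length π) ∧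
    (∀ G : Finset (Fin Q.length), G ∈ DeltaW Ws Q →
      G.card = Q.length - cs.length π - 1 →
      {F : Finset (Fin Q.length) | IsFacet (DeltaW Ws Q) F ∧ G ⊆ F}.ncard ≤ 2) := by
  have hlen : ∀ w ∈ Ws, w.length = cs.length π := fun w hw => (hred w hw).2 ▸ (hred w hw).1.symm
  refine ⟨fun F hF => card_of_isFacet hlen hF, fun G _ hG => ?_⟩
  rcases Nat.lt_or_ge (cs.length π) Q.length with hlt | hge
  · exact ncard_isFacet_superset_le_two cs hred (by omega)
  · calc _ ≤ {F | IsFacet (DeltaW Ws Q) F}.ncard :=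
          Set.ncard_le_ncard (fun F hF => hF.1) (Set.toFinite _)
      _ ≤ 2 := (ncard_isFacet_le_one hlen hge).trans one_le_two

theorem deltaW_facets_and_thinness (cs : CoxeterSystem M W) (Q : List B) (π : W)
    (Ws : Set (List B))
    (hred : ∀ w ∈ Ws, cs.IsReduced w ∧ cs.wordProd w = π)
    (hQ : ∃ w ∈ Ws, w.Sublist Q) :
    (∀ F : Finset (Fin Q.length), IsFacet (DeltaW Ws Q) F →
      F.card = Q.length - cs.length π) ∧
    (∀ G : Finset (Fin Q.length), G ∈ DeltaW Ws Q →
      G.card = Q.length - cs.length π - 1 →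
      {F : Finset (Fin Q.length) | IsFacet (DeltaW Ws Q) F ∧ G ⊆ F}.ncard ≤ 2) :=
  deltaW_facets_and_thinness_general cs Q π Ws hred
end

section
/- Let k be a field and R = k[z_{11}, z_{12}, z_{13}, z_{21}, z_{22}, z_{23}, z_{31}, z_{32}, z_{33}] the polynomial ring in nine variables. Then the monomial ideal ⟨z_{12}z_{21}, z_{13}z_{21}, z_{13}z_{22}, z_{12}z_{31}, z_{22}z_{31}⟩ equals the intersection of ideals ⟨z_{12}, z_{13}, z_{22}⟩ ∩ ⟨z_{12}, z_{13}, z_{31}⟩ ∩ ⟨z_{13}, z_{21}, z_{31}⟩ ∩ ⟨z_{21}, z_{22}, z_{31}⟩ ∩ ⟨z_{12}, z_{21}, z_{22}⟩. -/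
/-!
STATEMENT 15: Let k be a field and R = k[z_{11},…,z_{33}] the polynomial ring in nine
variables. Then ⟨z_{12}z_{21}, z_{13}z_{21}, z_{13}z_{22}, z_{12}z_{31}, z_{22}z_{31}⟩
equals ⟨z_{12}, z_{13}, z_{22}⟩ ∩ ⟨z_{12}, z_{13}, z_{31}⟩ ∩ ⟨z_{13}, z_{21}, z_{31}⟩
∩ ⟨z_{21}, z_{22}, z_{31}⟩ ∩ ⟨z_{12}, z_{21}, z_{22}⟩.

The variable `z_{ab}` is `MvPolynomial.X (a-1, b-1)` over the index type `Fin 3 × Fin 3`.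
-/

open MvPolynomial

/-- The variable `z_{(i+1)(j+1)}` of the polynomial ring `k[z_{11},…,z_{33}]`. -/
noncomputable def z (K : Type*) [Field K] (i j : Fin 3) : MvPolynomial (Fin 3 × Fin 3) K :=
  X (i, j)

section helpers
variable {K : Type*} [Field K]

noncomputable def E (i j : Fin 3) : (Fin 3 × Fin 3) →₀ ℕ := Finsupp.single (i, j) 1

lemma z_eq (i j : Fin 3) : z K i j = monomial (E i j) (1 : K) := by
  simp [z, X, E]

lemma zz_eq (i j k l : Fin 3) :
    z K i j * z K k l = monomial (E i j + E k l) (1 : K) := by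
  simp [z_eq, monomial_mul]

lemma pair_le (u v : Fin 3 × Fin 3) (h : u ≠ v) (m : (Fin 3 × Fin 3) →₀ ℕ) :
    Finsupp.single u 1 + Finsupp.single v 1 ≤ m ↔ 1 ≤ m u ∧ 1 ≤ m v := by
  rw [Finsupp.le_def]
  constructor
  · intro hm
    constructor
    · have := hm u; simpa [Finsupp.single_apply, h.symm] using this
    · have := hm v; simpa [Finsupp.single_apply, h] using this
  · rintro ⟨h1, h2⟩ x
    simp only [Finsupp.coe_add, Pi.add_apply, Finsupp.single_apply]
    split_ifs with p q q
    · exact absurd (p.trans q.symm) h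
    · subst p; simpa using h1
    · subst q; simpa using h2
    · simp

end helpers

set_option maxHeartbeats 2000000 in
theorem initial_ideal_primary_decomposition (K : Type*) [Field K] :
    Ideal.span ({z K 0 1 * z K 1 0, z K 0 2 * z K 1 0, z K 0 2 * z K 1 1,
        z K 0 1 * z K 2 0, z K 1 1 * z K 2 0} : Set (MvPolynomial (Fin 3 × Fin 3) K))
    = Ideal.span {z K 0 1, z K 0 2, z K 1 1}
      ⊓ Ideal.span {z K 0 1, z K 0 2, z K 2 0}
      ⊓ Ideal.span {z K 0 2, z K 1 0, z K 2 0}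
      ⊓ Ideal.span {z K 1 0, z K 1 1, z K 2 0}
      ⊓ Ideal.span {z K 0 1, z K 1 0, z K 1 1} := by
  have himg : ∀ s : Set ((Fin 3 × Fin 3) →₀ ℕ),
      (fun e => monomial e (1 : K)) '' s = (fun e => monomial e (1 : K)) '' s := fun _ => rfl
  have hL : ({z K 0 1 * z K 1 0, z K 0 2 * z K 1 0, z K 0 2 * z K 1 1,
      z K 0 1 * z K 2 0, z K 1 1 * z K 2 0} : Set (MvPolynomial (Fin 3 × Fin 3) K))
      = (fun e => monomial e (1 : K)) ''
        {E 0 1 + E 1 0, E 0 2 + E 1 0, E 0 2 + E 1 1, E 0 1 + E 2 0, E 1 1 + E 2 0} := by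
    simp only [Set.image_insert_eq, Set.image_singleton, zz_eq]
  have hS : ∀ a b c : Fin 3 × Fin 3,
      ({X a, X b, X c} : Set (MvPolynomial (Fin 3 × Fin 3) K))
      = (fun e => monomial e (1 : K)) ''
        {Finsupp.single a 1, Finsupp.single b 1, Finsupp.single c 1} := by
    intro a b c
    simp only [Set.image_insert_eq, Set.image_singleton, X]
  ext f
  simp only [Ideal.mem_inf]
  rw [hL, show z K 0 1 = X ((0:Fin 3),(1:Fin 3)) from rfl, show z K 0 2 = X ((0:Fin 3),(2:Fin 3)) from rfl,
    show z K 1 0 = X ((1:Fin 3),(0:Fin 3)) from rfl, show z K 1 1 = X ((1:Fin 3),(1:Fin 3)) from rfl,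
    show z K 2 0 = X ((2:Fin 3),(0:Fin 3)) from rfl]
  rw [hS, hS, hS, hS, hS]
  simp only [mem_ideal_span_monomial_image]
  have key : ∀ m : (Fin 3 × Fin 3) →₀ ℕ,
      (∃ si ∈ ({E 0 1 + E 1 0, E 0 2 + E 1 0, E 0 2 + E 1 1, E 0 1 + E 2 0,
          E 1 1 + E 2 0} : Set _), si ≤ m) ↔
        (∃ si ∈ ({E 0 1, E 0 2, E 1 1} : Set _), si ≤ m) ∧
        (∃ si ∈ ({E 0 1, E 0 2, E 2 0} : Set _), si ≤ m) ∧
        (∃ si ∈ ({E 0 2, E 1 0, E 2 0} : Set _), si ≤ m) ∧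
        (∃ si ∈ ({E 1 0, E 1 1, E 2 0} : Set _), si ≤ m) ∧
        (∃ si ∈ ({E 0 1, E 1 0, E 1 1} : Set _), si ≤ m) := by
    intro m
    simp only [Set.mem_insert_iff, Set.mem_singleton_iff, exists_eq_or_imp, exists_eq_left, E]
    rw [pair_le ((0 : Fin 3), (1 : Fin 3)) ((1 : Fin 3), (0 : Fin 3)) (by decide) m,
      pair_le ((0 : Fin 3), (2 : Fin 3)) ((1 : Fin 3), (0 : Fin 3)) (by decide) m,
      pair_le ((0 : Fin 3), (2 : Fin 3)) ((1 : Fin 3), (1 : Fin 3)) (by decide) m,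
      pair_le ((0 : Fin 3), (1 : Fin 3)) ((2 : Fin 3), (0 : Fin 3)) (by decide) m,
      pair_le ((1 : Fin 3), (1 : Fin 3)) ((2 : Fin 3), (0 : Fin 3)) (by decide) m]
    simp only [Finsupp.single_le_iff, Nat.one_le_iff_ne_zero]
    tauto
  constructor
  · intro h
    have h' := fun m hm => (key m).1 (h m hm)
    exact ⟨⟨⟨⟨fun m hm => (h' m hm).1, fun m hm => (h' m hm).2.1⟩,
      fun m hm => (h' m hm).2.2.1⟩, fun m hm => (h' m hm).2.2.2.1⟩,
      fun m hm => (h' m hm).2.2.2.2⟩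
  · rintro ⟨⟨⟨⟨h1, h2⟩, h3⟩, h4⟩, h5⟩ m hm
    exact (key m).2 ⟨h1 m hm, h2 m hm, h3 m hm, h4 m hm, h5 m hm⟩
end

section
/- Consider ℝ^{3×3} with coordinates w_{ij} for 1 ≤ i,j ≤ 3. The set C of all w satisfying w_{12}+w_{21} ≥ w_{11}+w_{22}, w_{13}+w_{21} ≥ w_{11}+w_{23}, w_{13}+w_{22} ≥ w_{12}+w_{23}, w_{12}+w_{31} ≥ w_{11}+w_{32}, and w_{22}+w_{31} ≥ w_{21}+w_{32} equals the set of all matrices of the form a_1·R_1 + a_2·R_2 + a_3·R_3 + M(a,b,c,d,e,f,g), where a_1, a_2, a_3 range over non-negative reals, a,b,c,d,e,f,g range over all reals, R_1 is the matrix whose only nonzero entry is −1 in position (2,3), R_2 is the matrix whose only nonzero entry is −1 in position (1,1), R_3 is the matrix whose only nonzero entry is −1 in position (3,2), and M(a,b,c,d,e,f,g) is the matrix with rows (a+e, a+f, a+g), (b+e, b+f, b+g), (c+e, c+f, d). -/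
/-!
Write `ℓ(i,j;k,l) = w_{il} + w_{jk} - w_{ik} - w_{jl}` for the antidiagonal excess of the `2 × 2`
submatrix on rows `i, j` and columns `k, l`; the cone is `ℓ ≥ 0` for five such submatrices.
Excesses add along adjacent columns and along adjacent rows, so only `ℓ(1,2;1,2)`, `ℓ(1,2;2,3)`
and `ℓ(2,3;1,2)` matter. Every matrix is these three excesses times `R₂`, `R₁`, `R₃` plus a
lineality matrix `M(…)` read off its first row and column, and on `a₁R₁ + a₂R₂ + a₃R₃ + M(…)`
the three excesses are `a₂`, `a₁`, `a₃`.

Indices in the code are 0-indexed: the paper's `w_{ij}` is `w (i-1) (j-1)`.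
-/

/-- `R₁`: the matrix whose only nonzero entry is `−1` in (1-indexed) position (2,3). -/
def R1 : Matrix (Fin 3) (Fin 3) ℝ := Matrix.single 1 2 (-1)

/-- `R₂`: the matrix whose only nonzero entry is `−1` in (1-indexed) position (1,1). -/
def R2 : Matrix (Fin 3) (Fin 3) ℝ := Matrix.single 0 0 (-1)

/-- `R₃`: the matrix whose only nonzero entry is `−1` in (1-indexed) position (3,2). -/
def R3 : Matrix (Fin 3) (Fin 3) ℝ := Matrix.single 2 1 (-1)

/-- The lineality-space parametrization `M(a,b,c,d,e,f,g)`. -/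
def linM (a b c d e f g : ℝ) : Matrix (Fin 3) (Fin 3) ℝ :=
  !![a + e, a + f, a + g; b + e, b + f, b + g; c + e, c + f, d]

namespace Matrix

variable {m n R : Type*} [AddCommGroup R] (w : Matrix m n R)

def antidiagExcess (i j : m) (k l : n) : R :=
  w i l + w j k - w i k - w j l

theorem antidiagExcess_add_antidiagExcess_cols (i j : m) (k l p : n) :
    w.antidiagExcess i j k l + w.antidiagExcess i j l p = w.antidiagExcess i j k p := by
  unfold antidiagExcess; abel

theorem antidiagExcess_add_antidiagExcess_rows (i j q : m) (k l : n) :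
    w.antidiagExcess i j k l + w.antidiagExcess j q k l = w.antidiagExcess i q k l := by
  unfold antidiagExcess; abel

theorem le_iff_nonneg_antidiagExcess [PartialOrder R] [IsOrderedAddMonoid R]
    (i j : m) (k l : n) :
    w i k + w j l ≤ w i l + w j k ↔ 0 ≤ w.antidiagExcess i j k l := by
  rw [show w.antidiagExcess i j k l = (w i l + w j k) - (w i k + w j l) by
    unfold antidiagExcess; abel, sub_nonneg]

end Matrix

open Matrix

theorem cone_conditions_iff (w : Matrix (Fin 3) (Fin 3) ℝ) :
    (w 0 0 + w 1 1 ≤ w 0 1 + w 1 0 ∧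
        w 0 0 + w 1 2 ≤ w 0 2 + w 1 0 ∧
        w 0 1 + w 1 2 ≤ w 0 2 + w 1 1 ∧
        w 0 0 + w 2 1 ≤ w 0 1 + w 2 0 ∧
        w 1 0 + w 2 1 ≤ w 1 1 + w 2 0) ↔
      0 ≤ w.antidiagExcess 0 1 0 1 ∧ 0 ≤ w.antidiagExcess 0 1 1 2 ∧
        0 ≤ w.antidiagExcess 1 2 0 1 := by
  simp only [le_iff_nonneg_antidiagExcess, ← antidiagExcess_add_antidiagExcess_cols w 0 1 0 1 2,
    ← antidiagExcess_add_antidiagExcess_rows w 0 1 2 0 1]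
  constructor
  · rintro ⟨h₁, -, h₃, -, h₅⟩
    exact ⟨h₁, h₃, h₅⟩
  · rintro ⟨h₁, h₃, h₅⟩
    exact ⟨h₁, add_nonneg h₁ h₃, h₃, add_nonneg h₁ h₅, h₅⟩

theorem smul_R1_add_smul_R2_add_smul_R3_add_linM (a1 a2 a3 a b c d e f g : ℝ) :
    a1 • R1 + a2 • R2 + a3 • R3 + linM a b c d e f g =
      !![a + e - a2, a + f, a + g; b + e, b + f, b + g - a1; c + e, c + f - a3, d] := by
  ext i j
  fin_cases i <;> fin_cases j <;> simp [R1, R2, R3, linM, Matrix.single] <;> ring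

theorem antidiagExcess_smul_R_add_linM (a1 a2 a3 a b c d e f g : ℝ) :
    let w := a1 • R1 + a2 • R2 + a3 • R3 + linM a b c d e f g
    w.antidiagExcess 0 1 0 1 = a2 ∧ w.antidiagExcess 0 1 1 2 = a1 ∧
      w.antidiagExcess 1 2 0 1 = a3 := by
  simp only [smul_R1_add_smul_R2_add_smul_R3_add_linM, antidiagExcess]
  refine ⟨?_, ?_, ?_⟩ <;> simp <;> ring

theorem eq_antidiagExcess_smul_R_add_linM (w : Matrix (Fin 3) (Fin 3) ℝ) :
    w = w.antidiagExcess 0 1 1 2 • R1 + w.antidiagExcess 0 1 0 1 • R2 +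
      w.antidiagExcess 1 2 0 1 • R3 +
      linM 0 (w 1 1 - w 0 1) (w 2 0 - w 0 1 - w 1 0 + w 1 1) (w 2 2)
        (w 0 1 + w 1 0 - w 1 1) (w 0 1) (w 0 2) := by
  rw [smul_R1_add_smul_R2_add_smul_R3_add_linM]
  ext i j
  fin_cases i <;> fin_cases j <;> simp [antidiagExcess] <;> ring

theorem antidiagonal_cone_1432 :
    {w : Matrix (Fin 3) (Fin 3) ℝ |
        w 0 0 + w 1 1 ≤ w 0 1 + w 1 0 ∧
        w 0 0 + w 1 2 ≤ w 0 2 + w 1 0 ∧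
        w 0 1 + w 1 2 ≤ w 0 2 + w 1 1 ∧
        w 0 0 + w 2 1 ≤ w 0 1 + w 2 0 ∧
        w 1 0 + w 2 1 ≤ w 1 1 + w 2 0}
    = {w : Matrix (Fin 3) (Fin 3) ℝ |
        ∃ a1 a2 a3 : ℝ, 0 ≤ a1 ∧ 0 ≤ a2 ∧ 0 ≤ a3 ∧
          ∃ a b c d e f g : ℝ,
            w = a1 • R1 + a2 • R2 + a3 • R3 + linM a b c d e f g} := by
  ext w
  rw [Set.mem_ofPred_eq, Set.mem_ofPred_eq, cone_conditions_iff]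
  constructor
  · rintro ⟨h₂, h₁, h₃⟩
    exact ⟨_, _, _, h₁, h₂, h₃, _, _, _, _, _, _, _, eq_antidiagExcess_smul_R_add_linM w⟩
  · rintro ⟨a1, a2, a3, h₁, h₂, h₃, a, b, c, d, e, f, g, rfl⟩
    obtain ⟨e₂, e₁, e₃⟩ := antidiagExcess_smul_R_add_linM a1 a2 a3 a b c d e f g
    rw [e₂, e₁, e₃]
    exact ⟨h₂, h₁, h₃⟩
end
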